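/- Let G be a group and q a natural number. Define the descending q-central sequence by G^(1) = G and G^(i+1) = (G^(i))^q [G^(i), G] (the subgroup generated by q-th powers of elements of G^(i) and commutators [h,g] with h ∈ G^(i), g ∈ G). Then [G^(2), G] is contained in [G,G]^q · [[G,G],G]. -/

import Mathlib

/-- The commutator convention of the paper: `[x,y] = x⁻¹y⁻¹xy`. -/
def pComm {G : Type*} [Group G] (x y : G) : G := x⁻¹ * y⁻¹ * x * y

/-- The subgroup generated by `q`-th powers of elements of `H`. -/
def qPow {G : Type*} [Group G] (q : ℕ) (H : Subgroup G) : Subgroup G :=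
  Subgroup.closure {x : G | ∃ h ∈ H, x = h ^ q}

/-- `H^q [H,G]`: the subgroup generated by `q`-th powers of elements of `H`
together with all commutators `[h,g]`, `h ∈ H`, `g ∈ G`. -/
def qVerbal {G : Type*} [Group G] (q : ℕ) (H : Subgroup G) : Subgroup G :=
  Subgroup.closure ({x : G | ∃ h ∈ H, x = h ^ q} ∪
    {x : G | ∃ h ∈ H, ∃ g : G, x = pComm h g})

/-- The descending q-central sequence; `qcs q G i` is `G^(i+1)` in the paper's
(1-based) notation, i.e. `qcs q G 0 = G` and `qcs q G (i+1) = (G^(i+1))^q [G^(i+1), G]`. -/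
def qcs (q : ℕ) (G : Type*) [Group G] : ℕ → Subgroup G
  | 0 => ⊤
  | i + 1 => qVerbal q (qcs q G i)

theorem qVerbal_normal {G : Type*} [Group G] (q : ℕ) {H : Subgroup G} (hH : H.Normal) :
    (qVerbal q H).Normal := by
  constructor
  intro n hn g
  set S : Set G := {x : G | ∃ h ∈ H, x = h ^ q} ∪ {x : G | ∃ h ∈ H, ∃ g : G, x = pComm h g} with hS
  have himg : (MulAut.conj g) '' S ⊆ (Subgroup.closure S : Set G) := by
    rintro _ ⟨x, hx, rfl⟩
    rcases hx with ⟨h, hh, rfl⟩ | ⟨h, hh, g', rfl⟩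
    · have : (MulAut.conj g) (h ^ q) = (g * h * g⁻¹) ^ q := by
        simp [MulAut.conj_apply, conj_pow]
      rw [this]
      exact Subgroup.subset_closure (Or.inl ⟨g * h * g⁻¹, hH.conj_mem h hh g, rfl⟩)
    · have : (MulAut.conj g) (pComm h g') = pComm (g * h * g⁻¹) (g * g' * g⁻¹) := by
        simp only [MulAut.conj_apply, pComm]
        group
      rw [this]
      exact Subgroup.subset_closure
        (Or.inr ⟨g * h * g⁻¹, hH.conj_mem h hh g, g * g' * g⁻¹, rfl⟩)
  have h1 : (Subgroup.closure S).map (MulAut.conj g).toMonoidHom ≤ Subgroup.closure S := by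
    rw [MonoidHom.map_closure]
    exact (Subgroup.closure_le _).2 himg
  exact h1 ⟨n, hn, by simp [MulAut.conj_apply]⟩

instance qcs_normal (q : ℕ) (G : Type*) [Group G] (i : ℕ) : (qcs q G i).Normal := by
  induction i with
  | zero => exact ⟨fun n _ g => Subgroup.mem_top _⟩
  | succ i ih => exact qVerbal_normal q ih

/-! Modulo `N := [G,G]^q [[G,G],G]` every commutator is central, so `[h^q, y] ≡ [h, y]^q ≡ 1`
and every generator of `G^(2) = G^q [G,G]` becomes central in `G/N`; hence `[G^(2), G] ≤ N`. -/

open scoped commutatorElement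

namespace Subgroup

variable {G : Type*} [Group G]

instance qPow_normal (q : ℕ) (H : Subgroup G) [hH : H.Normal] : (qPow q H).Normal := by
  rw [← normalizer_eq_top_iff, eq_top_iff, qPow, le_normalizer_closure_iff]
  rintro g - _ ⟨h, hh, rfl⟩
  exact subset_closure ⟨g * h * g⁻¹, hH.conj_mem h hh g, conj_pow.symm⟩

theorem commutator_top_le_iff_le_upperCentralSeriesStep (H N : Subgroup G) [N.Normal] :
    ⁅H, ⊤⁆ ≤ N ↔ H ≤ upperCentralSeriesStep N := by
  simp only [commutator_le, mem_top, true_implies]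
  rfl

end Subgroup

section

variable {G : Type*} [Group G]

theorem pComm_eq_commutatorElement (x y : G) : pComm x y = ⁅x⁻¹, y⁻¹⁆ := by
  simp [pComm, commutatorElement_def]

theorem commutatorElement_pow_left {a b : G} (h : Commute a ⁅a, b⁆) (n : ℕ) :
    ⁅a ^ n, b⁆ = ⁅a, b⁆ ^ n := by
  induction n with
  | zero => simp
  | succ n ih =>
    calc ⁅a ^ (n + 1), b⁆ = a * ⁅a ^ n, b⁆ * a⁻¹ * ⁅a, b⁆ := by
          simp only [pow_succ', commutatorElement_def]; group
      _ = ⁅a, b⁆ ^ (n + 1) := by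
          rw [ih, (h.pow_right n).eq, pow_succ]; group

theorem commutatorElement_pow_left_mem_iff {N : Subgroup G} [N.Normal]
    (hN : ⁅commutator G, ⊤⁆ ≤ N) (a b : G) (n : ℕ) : ⁅a ^ n, b⁆ ∈ N ↔ ⁅a, b⁆ ^ n ∈ N := by
  set φ := QuotientGroup.mk' N
  have hcomm : Commute (φ a) ⁅φ a, φ b⁆ := by
    rw [← commutatorElement_eq_one_iff_commute, ← map_commutatorElement, ← map_commutatorElement,
      ← MonoidHom.mem_ker, QuotientGroup.ker_mk']
    exact hN (Subgroup.commutator_comm (commutator G) ⊤ ▸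
      Subgroup.commutator_mem_commutator trivial (Subgroup.commutator_mem_commutator trivial trivial))
  rw [← QuotientGroup.ker_mk' N, MonoidHom.mem_ker, MonoidHom.mem_ker, map_commutatorElement,
    map_pow, map_pow, map_commutatorElement, commutatorElement_pow_left hcomm]

end

theorem commutator_qcs2_le {G : Type*} [Group G] (q : ℕ) :
    ⁅qcs q G 1, (⊤ : Subgroup G)⁆ ≤ qPow q (commutator G) ⊔ (⊤ : Subgroup G).lowerCentralSeries 2 := by
  set N := qPow q (commutator G) ⊔ (⊤ : Subgroup G).lowerCentralSeries 2
  have hγ₃ : ⁅commutator G, ⊤⁆ ≤ N := le_sup_right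
  have hcomm : commutator G ≤ Subgroup.upperCentralSeriesStep N :=
    (Subgroup.commutator_top_le_iff_le_upperCentralSeriesStep _ N).1 hγ₃
  rw [Subgroup.commutator_top_le_iff_le_upperCentralSeriesStep, qcs, qcs, qVerbal,
    Subgroup.closure_le]
  rintro _ (⟨h, -, rfl⟩ | ⟨h, -, g, rfl⟩) y
  · rw [commutatorElement_pow_left_mem_iff hγ₃]
    exact le_sup_left (a := qPow q (commutator G))
      (Subgroup.subset_closure ⟨⁅h, y⁆, Subgroup.commutator_mem_commutator trivial trivial, rfl⟩)
  · rw [pComm_eq_commutatorElement]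
    exact hcomm (Subgroup.commutator_mem_commutator trivial trivial) y
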